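/- Let S ≥ 1, μ̄ > 0, let a, y : Fin S → ℝ satisfy a i ∈ {0,1} and y i ∈ {0,1} for all i, with ∑_i a i ≥ 1 and ∑_i (1 − a i) ≥ 1, and let p, p̂ : Fin S → ℝ satisfy 0 ≤ p i ≤ 1, 0 ≤ p̂ i ≤ 1 and |p i − p̂ i| ≤ μ̄/(2·S) for all i. Then |constEO(p, a, y) − constEO(p̂, a, y)| ≤ μ̄. -/
import Mathlib


/-- The false-positive-rate gap of predictions `p` with binary group labels `a`
and binary true labels `y` on a batch of `S` samples. -/
noncomputable def fprV {S : ℕ} (p a y : Fin S → ℝ) : ℝ :=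
  |(∑ i, p i * (1 - y i) * a i) / (∑ i, a i) -
    (∑ i, p i * (1 - y i) * (1 - a i)) / (∑ i, (1 - a i))|

/-- The false-negative-rate gap. -/
noncomputable def fnrV {S : ℕ} (p a y : Fin S → ℝ) : ℝ :=
  |(∑ i, (1 - p i) * y i * a i) / (∑ i, a i) -
    (∑ i, (1 - p i) * y i * (1 - a i)) / (∑ i, (1 - a i))|

/-- The equalized-odds constraint. -/
noncomputable def constEO {S : ℕ} (p a y : Fin S → ℝ) : ℝ :=
  fprV p a y + fnrV p a y

lemma aux_sum_bound {S : ℕ} (f w w' : Fin S → ℝ) (ε : ℝ) (hε : 0 ≤ ε)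
    (hf : ∀ i, |f i| ≤ ε) (hw : ∀ i, 0 ≤ w i) (hw' : ∀ i, w i ≤ w' i) :
    |∑ i, f i * w i| ≤ ε * ∑ i, w' i := by
  calc |∑ i, f i * w i| ≤ ∑ i, |f i * w i| := Finset.abs_sum_le_sum_abs _ _
    _ ≤ ∑ i, ε * w' i := by
        refine Finset.sum_le_sum fun i _ => ?_
        rw [abs_mul, abs_of_nonneg (hw i)]
        exact mul_le_mul (hf i) (hw' i) (hw i) hε
    _ = ε * ∑ i, w' i := by rw [Finset.mul_sum]

theorem constEO_lipschitz (S : ℕ) (hS : 1 ≤ S) (μbar : ℝ) (hμ : 0 < μbar)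
    (a y p phat : Fin S → ℝ)
    (ha : ∀ i, a i = 0 ∨ a i = 1) (hy : ∀ i, y i = 0 ∨ y i = 1)
    (ha1 : 1 ≤ ∑ i, a i) (ha0 : 1 ≤ ∑ i, (1 - a i))
    (hp : ∀ i, 0 ≤ p i ∧ p i ≤ 1) (hphat : ∀ i, 0 ≤ phat i ∧ phat i ≤ 1)
    (hclose : ∀ i, |p i - phat i| ≤ μbar / (2 * (S : ℝ))) :
    |constEO p a y - constEO phat a y| ≤ μbar := by
  set ε := μbar / (2 * (S : ℝ)) with hεdef
  have hSpos : (0:ℝ) < S := by positivity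
  have hε : 0 ≤ ε := by positivity
  set A := ∑ i, a i with hA
  set B := ∑ i, (1 - a i) with hB
  have hApos : (0:ℝ) < A := lt_of_lt_of_le one_pos ha1
  have hBpos : (0:ℝ) < B := lt_of_lt_of_le one_pos ha0
  -- S ≥ 2
  have hAB : A + B = (S : ℝ) := by
    rw [hA, hB, ← Finset.sum_add_distrib]
    simp
  have hS2 : (2:ℝ) ≤ (S : ℝ) := by linarith
  -- weight facts
  have hy01 : ∀ i, 0 ≤ y i ∧ y i ≤ 1 := fun i => by rcases hy i with h | h <;> simp [h]
  have ha01 : ∀ i, 0 ≤ a i ∧ a i ≤ 1 := fun i => by rcases ha i with h | h <;> simp [h]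
  have hclose' : ∀ i, |(1 - p i) - (1 - phat i)| ≤ ε := fun i => by
    rw [show (1 - p i) - (1 - phat i) = -(p i - phat i) by ring, abs_neg]
    exact hclose i
  -- generic bound for one ratio difference
  have key : ∀ f : Fin S → ℝ, (∀ i, |f i| ≤ ε) →
      ∀ w w' : Fin S → ℝ, (∀ i, 0 ≤ w i) → (∀ i, w i ≤ w' i) →
      (∑ i, w' i) = A → |(∑ i, f i * w i) / A| ≤ ε := by
    intro f hf w w' hw hw' hsum
    rw [abs_div, abs_of_pos hApos, div_le_iff₀ hApos]
    have := aux_sum_bound f w w' ε hε hf hw hw'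
    rwa [hsum] at this
  have keyB : ∀ f : Fin S → ℝ, (∀ i, |f i| ≤ ε) →
      ∀ w w' : Fin S → ℝ, (∀ i, 0 ≤ w i) → (∀ i, w i ≤ w' i) →
      (∑ i, w' i) = B → |(∑ i, f i * w i) / B| ≤ ε := by
    intro f hf w w' hw hw' hsum
    rw [abs_div, abs_of_pos hBpos, div_le_iff₀ hBpos]
    have := aux_sum_bound f w w' ε hε hf hw hw'
    rwa [hsum] at this
  -- fpr part
  have hfpr : |fprV p a y - fprV phat a y| ≤ ε + ε := by
    unfold fprV
    refine le_trans (abs_abs_sub_abs_le_abs_sub _ _) ?_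
    have d1 : (∑ i, (p i - phat i) * ((1 - y i) * a i))
        = (∑ i, p i * (1 - y i) * a i) - (∑ i, phat i * (1 - y i) * a i) := by
      rw [← Finset.sum_sub_distrib]; exact Finset.sum_congr rfl fun i _ => by ring
    have d2 : (∑ i, (p i - phat i) * ((1 - y i) * (1 - a i)))
        = (∑ i, p i * (1 - y i) * (1 - a i)) - (∑ i, phat i * (1 - y i) * (1 - a i)) := by
      rw [← Finset.sum_sub_distrib]; exact Finset.sum_congr rfl fun i _ => by ring
    have e1 : (∑ i, p i * (1 - y i) * a i) / A - (∑ i, p i * (1 - y i) * (1 - a i)) / B -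
        ((∑ i, phat i * (1 - y i) * a i) / A - (∑ i, phat i * (1 - y i) * (1 - a i)) / B)
        = (∑ i, (p i - phat i) * ((1 - y i) * a i)) / A
          - (∑ i, (p i - phat i) * ((1 - y i) * (1 - a i))) / B := by
      rw [d1, d2]; ring
    rw [e1]
    refine le_trans (abs_sub _ _) (add_le_add ?_ ?_)
    · exact key _ hclose _ a
        (fun i => mul_nonneg (by linarith [(hy01 i).2]) (ha01 i).1)
        (fun i => by nlinarith [(hy01 i).1, (hy01 i).2, (ha01 i).1]) rfl
    · exact keyB _ hclose _ (fun i => 1 - a i)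
        (fun i => mul_nonneg (by linarith [(hy01 i).2]) (by linarith [(ha01 i).2]))
        (fun i => by show _ ≤ 1 - a i; nlinarith [(hy01 i).1, (hy01 i).2, (ha01 i).2]) rfl
  -- fnr part
  have hfnr : |fnrV p a y - fnrV phat a y| ≤ ε + ε := by
    unfold fnrV
    refine le_trans (abs_abs_sub_abs_le_abs_sub _ _) ?_
    have d1 : (∑ i, ((1 - p i) - (1 - phat i)) * (y i * a i))
        = (∑ i, (1 - p i) * y i * a i) - (∑ i, (1 - phat i) * y i * a i) := by
      rw [← Finset.sum_sub_distrib]; exact Finset.sum_congr rfl fun i _ => by ring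
    have d2 : (∑ i, ((1 - p i) - (1 - phat i)) * (y i * (1 - a i)))
        = (∑ i, (1 - p i) * y i * (1 - a i)) - (∑ i, (1 - phat i) * y i * (1 - a i)) := by
      rw [← Finset.sum_sub_distrib]; exact Finset.sum_congr rfl fun i _ => by ring
    have e1 : (∑ i, (1 - p i) * y i * a i) / A - (∑ i, (1 - p i) * y i * (1 - a i)) / B -
        ((∑ i, (1 - phat i) * y i * a i) / A - (∑ i, (1 - phat i) * y i * (1 - a i)) / B)
        = (∑ i, ((1 - p i) - (1 - phat i)) * (y i * a i)) / A
          - (∑ i, ((1 - p i) - (1 - phat i)) * (y i * (1 - a i))) / B := by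
      rw [d1, d2]; ring
    rw [e1]
    refine le_trans (abs_sub _ _) (add_le_add ?_ ?_)
    · exact key _ hclose' _ a
        (fun i => mul_nonneg (hy01 i).1 (ha01 i).1)
        (fun i => by nlinarith [(hy01 i).1, (hy01 i).2, (ha01 i).1]) rfl
    · exact keyB _ hclose' _ (fun i => 1 - a i)
        (fun i => mul_nonneg (hy01 i).1 (by linarith [(ha01 i).2]))
        (fun i => by show _ ≤ 1 - a i; nlinarith [(hy01 i).1, (hy01 i).2, (ha01 i).2]) rfl
  have htot : |constEO p a y - constEO phat a y| ≤ 4 * ε := by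
    unfold constEO
    calc |fprV p a y + fnrV p a y - (fprV phat a y + fnrV phat a y)|
        = |(fprV p a y - fprV phat a y) + (fnrV p a y - fnrV phat a y)| := by ring_nf
      _ ≤ |fprV p a y - fprV phat a y| + |fnrV p a y - fnrV phat a y| := abs_add_le _ _
      _ ≤ (ε + ε) + (ε + ε) := add_le_add hfpr hfnr
      _ = 4 * ε := by ring
  refine htot.trans ?_
  rw [hεdef, show 4 * (μbar / (2 * (S:ℝ))) = 2 * μbar / S by ring,
    div_le_iff₀ hSpos]
  nlinarith
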